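/- For k a nonnegative integer, the potential V(x) = x² + (k(k+1)/2)·((2k−1)/x⁴ + k(k+1)/(2x⁶)) admits ψ_k(x) = x^{k+1}·exp(−x²/2 − k(k+1)/(4x²)) as a solution of −ψ'' + Vψ = Eψ on (0,∞) with E_k = 2k+3, for the case k = 1 (so V(x) = x² + 1/x⁴ + 1/x⁶, ψ₁(x) = x²·exp(−x²/2 − 1/(2x²)), E₁ = 5). -/

import Mathlib

/-!
Writing `ψ = x^(k+1) e^φ` with `φ = -x²/2 - k(k+1)/(4x²)`, the logarithmic derivative
`w = ψ'/ψ = (k+1)/x + φ'` reduces the equation to the Riccati identity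
`ψ''/ψ = w' + w² = V - (2k+3)`. For a general coefficient `a/x²` in `φ`, `w' + w²` has a
`1/x²` term with coefficient `k(k+1) - 4a`; the choice `a = k(k+1)/4` is what kills it.
-/

open Real Filter Topology

theorem deriv_deriv_eq_of_eventually_hasDerivAt_mul {𝕜 : Type*} [NontriviallyNormedField 𝕜]
    {ψ w : 𝕜 → 𝕜} {x w' : 𝕜} (hψ : ∀ᶠ y in 𝓝 x, HasDerivAt ψ (w y * ψ y) y)
    (hw : HasDerivAt w w' x) :
    deriv (deriv ψ) x = (w' + w x ^ 2) * ψ x := by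
  have hderiv : deriv ψ =ᶠ[𝓝 x] fun y => w y * ψ y := hψ.mono fun y hy => hy.deriv
  rw [hderiv.deriv_eq, (hw.fun_mul hψ.self_of_nhds).deriv]
  ring

theorem hasDerivAt_pow_of_ne_zero (n : ℕ) {x : ℝ} (hx : x ≠ 0) :
    HasDerivAt (· ^ n) (n / x * x ^ n) x := by
  refine (hasDerivAt_pow n x).congr_deriv ?_
  rcases n with _ | n
  · simp
  · field_simp
    simp [pow_succ]

section PowMulExp

variable (n : ℕ) (a : ℝ)

noncomputable def powMulExp (x : ℝ) : ℝ := x ^ n * exp (-x ^ 2 / 2 - a / x ^ 2)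

noncomputable def powMulExpLogDeriv (x : ℝ) : ℝ := n / x - x + 2 * a / x ^ 3

theorem hasDerivAt_powMulExp {x : ℝ} (hx : x ≠ 0) :
    HasDerivAt (powMulExp n a) (powMulExpLogDeriv n a x * powMulExp n a x) x := by
  have hphase : HasDerivAt (fun y : ℝ => -y ^ 2 / 2 - a / y ^ 2) (-x + 2 * a / x ^ 3) x := by
    refine (((hasDerivAt_pow 2 x).neg.div_const 2).sub
      ((hasDerivAt_const x a).fun_div (hasDerivAt_pow 2 x) (pow_ne_zero 2 hx))).congr_deriv ?_
    field_simp
    ring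
  refine ((hasDerivAt_pow_of_ne_zero n hx).fun_mul hphase.exp).congr_deriv ?_
  simp only [powMulExp, powMulExpLogDeriv]
  ring

theorem hasDerivAt_powMulExpLogDeriv {x : ℝ} (hx : x ≠ 0) :
    HasDerivAt (powMulExpLogDeriv n a) (-n / x ^ 2 - 1 - 6 * a / x ^ 4) x := by
  refine ((((hasDerivAt_const x (n : ℝ)).fun_div (hasDerivAt_id x) hx).sub (hasDerivAt_id x)).add
    ((hasDerivAt_const x (2 * a)).fun_div (hasDerivAt_pow 3 x) (pow_ne_zero 3 hx))).congr_deriv ?_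
  simp only [id]
  field_simp
  ring

theorem deriv_deriv_powMulExp {x : ℝ} (hx : x ≠ 0) :
    deriv (deriv (powMulExp n a)) x =
      (-n / x ^ 2 - 1 - 6 * a / x ^ 4 + powMulExpLogDeriv n a x ^ 2) * powMulExp n a x :=
  deriv_deriv_eq_of_eventually_hasDerivAt_mul
    ((isOpen_ne.eventually_mem hx).mono fun _ hy => hasDerivAt_powMulExp n a hy)
    (hasDerivAt_powMulExpLogDeriv n a hx)

end PowMulExp

noncomputable def anharmonicGroundState (k : ℕ) : ℝ → ℝ := powMulExp (k + 1) (k * (k + 1) / 4)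

noncomputable def anharmonicPotential (k : ℕ) (x : ℝ) : ℝ :=
  x ^ 2 + k * (k + 1) / 2 * ((2 * k - 1) / x ^ 4 + k * (k + 1) / (2 * x ^ 6))

theorem neg_deriv_deriv_add_anharmonicPotential_mul (k : ℕ) {x : ℝ} (hx : x ≠ 0) :
    -deriv (deriv (anharmonicGroundState k)) x
        + anharmonicPotential k x * anharmonicGroundState k x
      = (2 * k + 3) * anharmonicGroundState k x := by
  rw [anharmonicGroundState, deriv_deriv_powMulExp _ _ hx, anharmonicPotential, powMulExpLogDeriv]
  push_cast
  field_simp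
  ring

theorem exact_eigenfunction_k_one
    (V : ℝ → ℝ) (hV : ∀ x : ℝ, V x = x ^ 2 + 1 / x ^ 4 + 1 / x ^ 6)
    (ψ : ℝ → ℝ)
    (hψ : ∀ x : ℝ, ψ x = x ^ 2 * Real.exp (-x ^ 2 / 2 - 1 / (2 * x ^ 2))) :
    ∀ x : ℝ, 0 < x → -(deriv (deriv ψ) x) + V x * ψ x = 5 * ψ x := by
  intro x hx
  have hψ_eq : ψ = anharmonicGroundState 1 := by
    ext y
    rw [hψ, anharmonicGroundState, powMulExp]
    push_cast
    ring_nf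
  have hV_eq : V x = anharmonicPotential 1 x := by
    rw [hV, anharmonicPotential]
    ring
  have h := neg_deriv_deriv_add_anharmonicPotential_mul 1 hx.ne'
  rw [hψ_eq, hV_eq]
  norm_num at h ⊢
  exact h
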